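/- Let i ∈ {0,…,n}, let G = 𝒫ⁿ_{S_i⇌0}, and let Ḡ be the network on the species of G together with one new species S_{n+1}, whose reactions are those of G together with S_n+E→S_{n+1}+E and S_{n+1}+F→S_n+F, with rates κ̄* extending κ* by assigning rate a > 0 to both new reactions. If x' is a nondegenerate positive steady state of (G,κ*), then the point x̄' defined by x̄'_{S_{n+1}} = x'_{S_n} x'_E / x'_F and x̄'_X = x'_X for every species X of G is a nondegenerate positive steady state of (Ḡ, κ̄*). -/

import Mathlib

/-- A reaction `y → y'` is a pair of complexes, each a vector of
nonnegative integer coefficients indexed by the species: the source and the target. -/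
abbrev Reaction (S : Type) : Type := (S → ℕ) × (S → ℕ)

section General

variable {S : Type} [Fintype S] [DecidableEq S]

/-- The complex consisting of a single copy of species `s`. -/
def unitC (s : S) : S → ℕ := fun t => if t = s then 1 else 0

/-- The complex `a + b`. -/
def pairC (a b : S) : S → ℕ := fun t => (if t = a then 1 else 0) + (if t = b then 1 else 0)

/-- The mass action right-hand side `f_κ` of a network `R` with rates `κ`. -/
def massAction (R : Finset (Reaction S)) (κ : Reaction S → ℝ) (x : S → ℝ) : S → ℝ :=
  fun s => ∑ r ∈ R, κ r * (∏ t, x t ^ r.1 t) * ((r.2 s : ℝ) - (r.1 s : ℝ))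

/-- The stoichiometric subspace of a network: the span of its reaction vectors. -/
def stoichSubspace (R : Finset (Reaction S)) : Submodule ℝ (S → ℝ) :=
  Submodule.span ℝ ((fun r : Reaction S => fun s => ((r.2 s : ℝ) - (r.1 s : ℝ))) '' ↑R)

/-- A positive steady state of the mass action system `(R, κ)`. -/
def isPosSteadyState (R : Finset (Reaction S)) (κ : Reaction S → ℝ) (x : S → ℝ) : Prop :=
  (∀ s, 0 < x s) ∧ massAction R κ x = 0

/-- A steady state is nondegenerate if the kernel of the Jacobian of the mass action
right-hand side intersects the stoichiometric subspace trivially. -/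
def nondegenerate (R : Finset (Reaction S)) (κ : Reaction S → ℝ) (x : S → ℝ) : Prop :=
  ∀ v ∈ stoichSubspace R, fderiv ℝ (massAction R κ) x v = 0 → v = 0

/-- A network admits nondegenerate multistationarity if for some positive rates there are
two distinct nondegenerate positive steady states in the same stoichiometric
compatibility class. -/
def admitsNondegMultistationarity (R : Finset (Reaction S)) : Prop :=
  ∃ κ : Reaction S → ℝ, (∀ r ∈ R, 0 < κ r) ∧
    ∃ x y : S → ℝ, x ≠ y ∧
      isPosSteadyState R κ x ∧ isPosSteadyState R κ y ∧
      nondegenerate R κ x ∧ nondegenerate R κ y ∧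
      y - x ∈ stoichSubspace R

/-- The inflow reaction `0 → s`. -/
def inflow (s : S) : Reaction S := (fun _ => 0, unitC s)

/-- The outflow reaction `s → 0`. -/
def outflow (s : S) : Reaction S := (unitC s, fun _ => 0)

/-- The open network on `E`: add inflow and outflow reactions for every species of `E`. -/
def openOn (R : Finset (Reaction S)) (E : Finset S) : Finset (Reaction S) :=
  R ∪ E.image inflow ∪ E.image outflow

/-- A conservation law: a vector orthogonal to the stoichiometric subspace. -/
def conservationLaw (R : Finset (Reaction S)) (w : S → ℝ) : Prop :=
  ∀ v ∈ stoichSubspace R, ∑ s, w s * v s = 0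

/-- A set `E` of species is independently conserved in `R` if there are conservation laws
`L e` for `e ∈ E` such that `L e` has a nonzero coordinate at `e` and zero coordinate at
`e` for every other `L e'`, `e' ∈ E`. -/
def IndepConserved (R : Finset (Reaction S)) (E : Finset S) : Prop :=
  ∃ L : S → (S → ℝ), ∀ e ∈ E,
    conservationLaw R (L e) ∧ L e e ≠ 0 ∧ ∀ e' ∈ E, e' ≠ e → L e' e = 0

/-- A species is closed in `R` if neither its inflow nor its outflow is a reaction of `R`. -/
def ClosedIn (R : Finset (Reaction S)) (s : S) : Prop :=
  inflow s ∉ R ∧ outflow s ∉ R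

/-- Projection of a complex onto the coordinates outside `E`. -/
def projC (E : Finset S) (y : S → ℕ) : {s : S // s ∉ E} → ℕ := fun s => y s.val

/-- Projection of a reaction onto the coordinates outside `E`. -/
def projR (E : Finset S) (r : Reaction S) : Reaction {s : S // s ∉ E} :=
  (projC E r.1, projC E r.2)

/-- The projected network `G₋E` on the species outside `E`: project all reactions and
remove self-loops. -/
def projNet (R : Finset (Reaction S)) (E : Finset S) : Finset (Reaction {s : S // s ∉ E}) :=
  (R.image (projR E)).filter fun r => r.1 ≠ r.2

/-- Inclusion of a reaction on the species of `E` into a reaction on all of `S`. -/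
def inclR (E : Finset S) (r : Reaction {s : S // s ∈ E}) : Reaction S :=
  (fun s => if h : s ∈ E then r.1 ⟨s, h⟩ else 0,
   fun s => if h : s ∈ E then r.2 ⟨s, h⟩ else 0)

/-- `R` has at most `l` positive steady states in each stoichiometric compatibility class,
for every choice of positive reaction rates: there is no injective family of `l + 1`
positive steady states lying pairwise in the same compatibility class. -/
def atMostPosSS (R : Finset (Reaction S)) (l : ℕ) : Prop :=
  ∀ κ : Reaction S → ℝ, (∀ r ∈ R, 0 < κ r) →
    ∀ f : Fin (l + 1) → (S → ℝ),
      (∀ j, isPosSteadyState R κ (f j)) →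
      (∀ j k, f k - f j ∈ stoichSubspace R) →
      ¬ Function.Injective f

/-- Monostationarity: at most one positive steady state in each stoichiometric
compatibility class, for every choice of positive rates. -/
def monostationary (R : Finset (Reaction S)) : Prop :=
  atMostPosSS R 1

end General

/-- Species of the sequential `n`-site phosphorylation–dephosphorylation cycle:
the enzymes `E`, `F`, the substrates `S i` for `i = 0, …, n`, and the intermediates
`ES i` for `i = 0, …, n-1` and `FS i` (denoting `FS_{i+1}`) for `i = 0, …, n-1`. -/
inductive PS (n : ℕ) : Type
  | E : PS n
  | F : PS n
  | S : Fin (n + 1) → PS n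
  | ES : Fin n → PS n
  | FS : Fin n → PS n
deriving DecidableEq, Fintype

/-- The sequential `n`-site phosphorylation–dephosphorylation cycle `𝒫ⁿ`, with the `6n`
reactions `S_i + E ⇌ ES_i`, `ES_i → S_{i+1} + E` for `i = 0, …, n-1` and
`S_i + F ⇌ FS_i`, `FS_i → S_{i-1} + F` for `i = 1, …, n`. -/
def Pcycle (n : ℕ) : Finset (Reaction (PS n)) :=
  (Finset.univ.image fun i : Fin n => (pairC (PS.S i.castSucc) PS.E, unitC (PS.ES i))) ∪
  (Finset.univ.image fun i : Fin n => (unitC (PS.ES i), pairC (PS.S i.castSucc) PS.E)) ∪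
  (Finset.univ.image fun i : Fin n => (unitC (PS.ES i), pairC (PS.S i.succ) PS.E)) ∪
  (Finset.univ.image fun i : Fin n => (pairC (PS.S i.succ) PS.F, unitC (PS.FS i))) ∪
  (Finset.univ.image fun i : Fin n => (unitC (PS.FS i), pairC (PS.S i.succ) PS.F)) ∪
  (Finset.univ.image fun i : Fin n => (unitC (PS.FS i), pairC (PS.S i.castSucc) PS.F))

/-- Extend a reaction of `𝒫ⁿ` (on species `PS n`) to the species set `Option (PS n)`,
where `none` denotes the new species `S_{n+1}`. -/
def liftR (n : ℕ) (r : Reaction (PS n)) : Reaction (Option (PS n)) :=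
  (fun o => Option.elim o 0 r.1, fun o => Option.elim o 0 r.2)

/-- The new reaction `S_n + E → S_{n+1} + E`. -/
def newFwd (n : ℕ) : Reaction (Option (PS n)) :=
  (pairC (some (PS.S (Fin.last n))) (some PS.E), pairC none (some PS.E))

/-- The new reaction `S_{n+1} + F → S_n + F`. -/
def newBwd (n : ℕ) : Reaction (Option (PS n)) :=
  (pairC none (some PS.F), pairC (some (PS.S (Fin.last n))) (some PS.F))

/-- The extended network `Ḡ`: the reactions of `G = 𝒫ⁿ_{S_i⇌0}` together with
`S_n + E → S_{n+1} + E` and `S_{n+1} + F → S_n + F`. -/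
def barNet (n : ℕ) (i : Fin (n + 1)) : Finset (Reaction (Option (PS n))) :=
  (openOn (Pcycle n) {PS.S i}).image (liftR n) ∪ {newFwd n, newBwd n}

/-- The extension `x̄` of a state `x` of `G`, setting
`x̄_{S_{n+1}} = x_{S_n} · x_E / x_F` and `x̄_X = x_X` on the other species. -/
noncomputable def extendState (n : ℕ) (x : PS n → ℝ) : Option (PS n) → ℝ :=
  fun o => Option.elim o (x (PS.S (Fin.last n)) * x PS.E / x PS.F) x

section ExtendAux

variable {n : ℕ}

noncomputable def pim (n : ℕ) : (Option (PS n) → ℝ) →L[ℝ] (PS n → ℝ) :=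
  ContinuousLinearMap.pi fun t => ContinuousLinearMap.proj (some t)

noncomputable def lm (n : ℕ) : (PS n → ℝ) →L[ℝ] (Option (PS n) → ℝ) :=
  ContinuousLinearMap.pi fun o => Option.elim o 0 fun s => ContinuousLinearMap.proj s

def dv (n : ℕ) : Option (PS n) → ℝ :=
  fun o => Option.elim o 1 fun s => if s = PS.S (Fin.last n) then -1 else 0

def betaF (n : ℕ) (a : ℝ) (z : Option (PS n) → ℝ) : ℝ :=
  a * (z (some (PS.S (Fin.last n))) * z (some PS.E)) - a * (z none * z (some PS.F))

lemma liftR_injective : Function.Injective (liftR n) := by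
  intro r r' h
  have h1 := congrArg Prod.fst h
  have h2 := congrArg Prod.snd h
  exact Prod.ext (funext fun t => congrFun h1 (some t))
    (funext fun t => congrFun h2 (some t))

lemma newFwd_ne_newBwd : newFwd n ≠ newBwd n := by
  intro h
  have := congrFun (congrArg Prod.fst h) none
  simp [newFwd, newBwd, pairC] at this

lemma newFwd_not_lift (r : Reaction (PS n)) : liftR n r ≠ newFwd n := by
  intro h
  have := congrFun (congrArg Prod.snd h) none
  simp [newFwd, liftR, pairC] at this

lemma newBwd_not_lift (r : Reaction (PS n)) : liftR n r ≠ newBwd n := by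
  intro h
  have := congrFun (congrArg Prod.fst h) none
  simp [newBwd, liftR, pairC] at this

lemma sum_barNet (i : Fin (n + 1)) (f : Reaction (Option (PS n)) → ℝ) :
    ∑ r ∈ barNet n i, f r =
      (∑ r ∈ openOn (Pcycle n) {PS.S i}, f (liftR n r)) + (f (newFwd n) + f (newBwd n)) := by
  rw [barNet, Finset.sum_union, Finset.sum_image (fun r _ r' _ h => liftR_injective h),
    Finset.sum_pair newFwd_ne_newBwd]
  · rw [Finset.disjoint_right]
    intro r hr
    simp only [Finset.mem_insert, Finset.mem_singleton] at hr
    simp only [Finset.mem_image, not_exists]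
    rintro r' ⟨-, h⟩
    rcases hr with h' | h' <;> rw [h'] at h
    · exact newFwd_not_lift r' h
    · exact newBwd_not_lift r' h

lemma prod_pow_unitC {S : Type} [Fintype S] [DecidableEq S] (z : S → ℝ) (a : S) :
    ∏ t, z t ^ unitC a t = z a := by
  have : ∀ t, z t ^ unitC a t = if t = a then z t else 1 := by
    intro t; by_cases h : t = a <;> simp [unitC, h]
  simp only [this]
  simp

lemma prod_pow_pairC {S : Type} [Fintype S] [DecidableEq S] (z : S → ℝ) (a b : S) :
    ∏ t, z t ^ pairC a b t = z a * z b := by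
  have : ∀ t, z t ^ pairC a b t =
      (if t = a then z t else 1) * (if t = b then z t else 1) := by
    intro t; simp only [pairC, pow_add]
    congr 1 <;> (split <;> simp)
  simp only [this, Finset.prod_mul_distrib]
  simp

lemma prod_pow_lift (z : Option (PS n) → ℝ) (r : Reaction (PS n)) :
    ∏ o, z o ^ (liftR n r).1 o = ∏ t, z (some t) ^ r.1 t := by
  rw [Fintype.prod_option]
  simp [liftR]

lemma massAction_differentiable {S : Type} [Fintype S] [DecidableEq S]
    (R : Finset (Reaction S)) (κ : Reaction S → ℝ) :
    Differentiable ℝ (massAction R κ) := by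
  unfold massAction
  rw [differentiable_pi]
  intro s
  apply Differentiable.fun_sum
  intro r _
  apply Differentiable.mul
  · apply Differentiable.const_mul
    have : ∀ u : Finset S, Differentiable ℝ (fun y : S → ℝ => ∏ t ∈ u, y t ^ r.1 t) := by
      intro u
      induction u using Finset.induction with
      | empty => simp only [Finset.prod_empty]; exact differentiable_const (1 : ℝ)
      | insert _ _ h ih =>
        simp only [Finset.prod_insert h]
        exact ((differentiable_pi.mp differentiable_id _).pow _).mul ih
    exact this Finset.univ
  · exact differentiable_const _

end ExtendAux
lemma pim_apply (z : Option (PS n) → ℝ) (t : PS n) : pim n z t = z (some t) := rfl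

lemma lm_apply_none (y : PS n → ℝ) : lm n y none = 0 := rfl

lemma lm_apply_some (y : PS n → ℝ) (s : PS n) : lm n y (some s) = y s := rfl

lemma key_formula (i : Fin (n + 1)) (κ : Reaction (PS n) → ℝ) (a : ℝ)
    (κbar : Reaction (Option (PS n)) → ℝ)
    (hκbar : ∀ r ∈ openOn (Pcycle n) {PS.S i}, κbar (liftR n r) = κ r)
    (hfwd : κbar (newFwd n) = a) (hbwd : κbar (newBwd n) = a)
    (z : Option (PS n) → ℝ) :
    massAction (barNet n i) κbar z =
      lm n (massAction (openOn (Pcycle n) {PS.S i}) κ (pim n z)) + betaF n a z • dv n := by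
  have hsum : ∀ o : Option (PS n), (∑ r ∈ openOn (Pcycle n) {PS.S i},
      κbar (liftR n r) * (∏ t, z t ^ (liftR n r).1 t) *
        (((liftR n r).2 o : ℝ) - ((liftR n r).1 o : ℝ)))
      = Option.elim o 0 (fun s => massAction (openOn (Pcycle n) {PS.S i}) κ (pim n z) s) := by
    intro o
    cases o with
    | none => apply Finset.sum_eq_zero; intro r _; simp [liftR]
    | some s =>
      simp only [Option.elim]
      unfold massAction
      apply Finset.sum_congr rfl
      intro r hr
      rw [hκbar r hr, prod_pow_lift]
      rfl
  funext o
  show (∑ r ∈ barNet n i, κbar r * (∏ t, z t ^ r.1 t) * ((r.2 o : ℝ) - (r.1 o : ℝ))) = _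
  rw [sum_barNet i (fun r => κbar r * (∏ t, z t ^ r.1 t) * ((r.2 o : ℝ) - (r.1 o : ℝ))),
    hsum o, hfwd, hbwd]
  have hm1 : (∏ t, z t ^ (newFwd n).1 t) = z (some (PS.S (Fin.last n))) * z (some PS.E) :=
    prod_pow_pairC z _ _
  have hm2 : (∏ t, z t ^ (newBwd n).1 t) = z none * z (some PS.F) :=
    prod_pow_pairC z _ _
  rw [hm1, hm2]
  cases o with
  | none =>
    simp only [Option.elim, Pi.add_apply, Pi.smul_apply, lm_apply_none, dv, betaF,
      newFwd, newBwd, pairC, smul_eq_mul]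
    simp; ring
  | some s =>
    simp only [Option.elim, Pi.add_apply, Pi.smul_apply, lm_apply_some, dv, betaF,
      newFwd, newBwd, pairC, smul_eq_mul, Option.some.injEq]
    by_cases hs : s = PS.S (Fin.last n) <;>
      by_cases hE : s = PS.E <;> by_cases hF : s = PS.F <;>
      simp [hs, hE, hF] <;> ring
def es (n : ℕ) (j : Fin (n + 1)) : PS n → ℝ := fun s => if s = PS.S j then 1 else 0

lemma rvec_mem {S : Type} [Fintype S] [DecidableEq S] {R : Finset (Reaction S)}
    {r : Reaction S} (hr : r ∈ R) :
    (fun s => ((r.2 s : ℝ) - (r.1 s : ℝ))) ∈ stoichSubspace R :=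
  Submodule.subset_span ⟨r, hr, rfl⟩

lemma mem_openOn_left {S : Type} [Fintype S] [DecidableEq S] {R : Finset (Reaction S)}
    {E : Finset S} {r : Reaction S} (hr : r ∈ R) : r ∈ openOn R E := by
  simp [openOn, hr]

lemma inflow_mem_openOn {S : Type} [Fintype S] [DecidableEq S] {R : Finset (Reaction S)}
    {E : Finset S} {e : S} (he : e ∈ E) : inflow e ∈ openOn R E := by
  simp only [openOn, Finset.mem_union]
  exact Or.inl (Or.inr (Finset.mem_image_of_mem _ he))

lemma bind_mem_P1 (j : Fin n) :
    (pairC (PS.S j.castSucc) PS.E, unitC (PS.ES j)) ∈ Pcycle n := by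
  simp only [Pcycle, Finset.mem_union, Finset.mem_image, Finset.mem_univ, true_and]
  exact Or.inl (Or.inl (Or.inl (Or.inl (Or.inl ⟨j, rfl⟩))))

lemma cat_mem_P3 (j : Fin n) :
    (unitC (PS.ES j), pairC (PS.S j.succ) PS.E) ∈ Pcycle n := by
  simp only [Pcycle, Finset.mem_union, Finset.mem_image, Finset.mem_univ, true_and]
  exact Or.inl (Or.inl (Or.inl (Or.inr ⟨j, rfl⟩)))

lemma es_mem_step (i : Fin (n + 1)) (j : Fin n)
    (h : es n j.castSucc ∈ stoichSubspace (openOn (Pcycle n) {PS.S i})) :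
    es n j.succ ∈ stoichSubspace (openOn (Pcycle n) {PS.S i}) := by
  have h1 := rvec_mem (mem_openOn_left (R := Pcycle n) (E := {PS.S i}) (bind_mem_P1 j))
  have h2 := rvec_mem (mem_openOn_left (R := Pcycle n) (E := {PS.S i}) (cat_mem_P3 j))
  have key : es n j.succ =
      ((fun s => (((pairC (PS.S j.castSucc) PS.E, unitC (PS.ES j)).2 s : ℝ) -
        ((pairC (PS.S j.castSucc) PS.E, unitC (PS.ES j)).1 s : ℝ))) +
       (fun s => (((unitC (PS.ES j), pairC (PS.S j.succ) PS.E).2 s : ℝ) -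
        ((unitC (PS.ES j), pairC (PS.S j.succ) PS.E).1 s : ℝ)))) + es n j.castSucc := by
    funext s
    have hne : j.succ ≠ j.castSucc := by
      intro hc
      have := congrArg Fin.val hc
      simp [Fin.val_succ] at this
    cases s <;>
      simp [es, pairC, unitC, Pi.add_apply] <;>
      split_ifs <;> simp_all <;> ring
  rw [key]
  exact add_mem (add_mem h1 h2) h

lemma es_last_mem (i : Fin (n + 1)) :
    es n (Fin.last n) ∈ stoichSubspace (openOn (Pcycle n) {PS.S i}) := by
  have base : es n i ∈ stoichSubspace (openOn (Pcycle n) {PS.S i}) := by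
    have h := rvec_mem (inflow_mem_openOn (R := Pcycle n)
      (Finset.mem_singleton_self (PS.S i)))
    have : (fun s => (((inflow (PS.S i)).2 s : ℝ) - ((inflow (PS.S i)).1 s : ℝ))) = es n i := by
      funext s
      simp [inflow, unitC, es]
    rwa [this] at h
  have up : ∀ m : ℕ, ∀ hm : i.val + m ≤ n,
      es n ⟨i.val + m, Nat.lt_succ_of_le hm⟩ ∈ stoichSubspace (openOn (Pcycle n) {PS.S i}) := by
    intro m
    induction m with
    | zero =>
      intro hm
      have : (⟨i.val + 0, Nat.lt_succ_of_le hm⟩ : Fin (n + 1)) = i := by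
        apply Fin.ext; simp
      rw [this]; exact base
    | succ m ih =>
      intro hm
      have hm' : i.val + m ≤ n := by omega
      have hj : i.val + m < n := by omega
      have hstep := es_mem_step i ⟨i.val + m, hj⟩ ?_
      · have : (⟨i.val + (m + 1), Nat.lt_succ_of_le hm⟩ : Fin (n + 1)) =
            Fin.succ ⟨i.val + m, hj⟩ := by
          apply Fin.ext; simp [Fin.val_succ]; omega
        rw [this]; exact hstep
      · have : Fin.castSucc (⟨i.val + m, hj⟩ : Fin n) =
            (⟨i.val + m, Nat.lt_succ_of_le hm'⟩ : Fin (n + 1)) := by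
          apply Fin.ext; simp
        rw [this]; exact ih hm'
  have hfin := up (n - i.val) (by omega)
  have : (⟨i.val + (n - i.val), Nat.lt_succ_of_le (by omega)⟩ : Fin (n + 1)) = Fin.last n := by
    apply Fin.ext
    simp only [Fin.val_last]
    omega
  rwa [this] at hfin

lemma pim_stoich (i : Fin (n + 1)) {v : Option (PS n) → ℝ}
    (hv : v ∈ stoichSubspace (barNet n i)) :
    pim n v ∈ stoichSubspace (openOn (Pcycle n) {PS.S i}) := by
  induction hv using Submodule.span_induction with
  | mem w hw =>
    rcases hw with ⟨r, hr, rfl⟩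
    rw [barNet, Finset.mem_coe, Finset.mem_union] at hr
    rcases hr with hr | hr
    · rcases Finset.mem_image.mp hr with ⟨r₀, hr₀, rfl⟩
      have : pim n (fun s => (((liftR n r₀).2 s : ℝ) - ((liftR n r₀).1 s : ℝ))) =
          fun t => ((r₀.2 t : ℝ) - (r₀.1 t : ℝ)) := rfl
      rw [this]
      exact rvec_mem hr₀
    · simp only [Finset.mem_insert, Finset.mem_singleton] at hr
      rcases hr with rfl | rfl
      · have : pim n (fun s => (((newFwd n).2 s : ℝ) - ((newFwd n).1 s : ℝ))) =
            -es n (Fin.last n) := by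
          funext t
          show (((newFwd n).2 (some t) : ℝ) - ((newFwd n).1 (some t) : ℝ)) = _
          simp only [newFwd, pairC, es, Pi.neg_apply]
          split_ifs <;> simp_all
        rw [this]
        exact neg_mem (es_last_mem i)
      · have : pim n (fun s => (((newBwd n).2 s : ℝ) - ((newBwd n).1 s : ℝ))) =
            es n (Fin.last n) := by
          funext t
          show (((newBwd n).2 (some t) : ℝ) - ((newBwd n).1 (some t) : ℝ)) = _
          simp only [newBwd, pairC, es]
          split_ifs <;> simp_all
        rw [this]
        exact es_last_mem i
  | zero => rw [map_zero]; exact zero_mem _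
  | add u w _ _ hu hw => rw [map_add]; exact add_mem hu hw
  | smul c u _ hu => rw [map_smul]; exact Submodule.smul_mem _ c hu

noncomputable def pj (n : ℕ) (o : Option (PS n)) : (Option (PS n) → ℝ) →L[ℝ] ℝ :=
  ContinuousLinearMap.proj o

@[simp] lemma pj_apply (o : Option (PS n)) (z : Option (PS n) → ℝ) : pj n o z = z o := rfl
/-- If `x` is a nondegenerate positive steady state of `(G, κ)` with
`G = 𝒫ⁿ_{S_i⇌0}`, then `x̄` is a nondegenerate positive steady state of `(Ḡ, κ̄)`,
where `κ̄` assigns the old rates to the reactions of `G` and rate `a > 0` to the two new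
reactions. -/
theorem extend_nondegenerate_steady_state (n : ℕ) (i : Fin (n + 1))
    (κ : Reaction (PS n) → ℝ) (hκ : ∀ r ∈ openOn (Pcycle n) {PS.S i}, 0 < κ r)
    (a : ℝ) (ha : 0 < a)
    (κbar : Reaction (Option (PS n)) → ℝ)
    (hκbar : ∀ r ∈ openOn (Pcycle n) {PS.S i}, κbar (liftR n r) = κ r)
    (hfwd : κbar (newFwd n) = a) (hbwd : κbar (newBwd n) = a)
    (x : PS n → ℝ)
    (hx : isPosSteadyState (openOn (Pcycle n) {PS.S i}) κ x)
    (hnd : nondegenerate (openOn (Pcycle n) {PS.S i}) κ x) :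
    isPosSteadyState (barNet n i) κbar (extendState n x) ∧
    nondegenerate (barNet n i) κbar (extendState n x) := by
  obtain ⟨hpos, hss⟩ := hx
  set G := openOn (Pcycle n) {PS.S i} with hGdef
  set xb := extendState n x with hxbdef
  have hxbpos : ∀ o, 0 < xb o := by
    intro o
    cases o with
    | none => exact div_pos (mul_pos (hpos _) (hpos _)) (hpos _)
    | some s => exact hpos s
  have hpim : pim n xb = x := funext fun t => rfl
  have hbeta0 : betaF n a xb = 0 := by
    show a * (xb (some (PS.S (Fin.last n))) * xb (some PS.E)) -
      a * (xb none * xb (some PS.F)) = 0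
    show a * (x (PS.S (Fin.last n)) * x PS.E) -
      a * ((x (PS.S (Fin.last n)) * x PS.E / x PS.F) * x PS.F) = 0
    rw [div_mul_cancel₀ _ (ne_of_gt (hpos PS.F))]
    ring
  have hfun : massAction (barNet n i) κbar =
      fun z => lm n (massAction G κ (pim n z)) + betaF n a z • dv n :=
    funext fun z => key_formula i κ a κbar hκbar hfwd hbwd z
  constructor
  · refine ⟨hxbpos, ?_⟩
    rw [hfun]
    simp only [hpim, hss, hbeta0, map_zero, zero_smul, add_zero]
  · intro v hv hJ
    -- set up the derivative
    have hMG0 : HasFDerivAt (massAction G κ) (fderiv ℝ (massAction G κ) x) x :=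
      ((massAction_differentiable G κ) x).hasFDerivAt
    have hMG : HasFDerivAt (massAction G κ) (fderiv ℝ (massAction G κ) x) (pim n xb) := by
      rw [hpim]; exact hMG0
    have h1 : HasFDerivAt (fun z => massAction G κ (pim n z))
        ((fderiv ℝ (massAction G κ) x).comp (pim n)) xb :=
      hMG.comp xb ((pim n).hasFDerivAt)
    have h2 : HasFDerivAt (fun z => lm n (massAction G κ (pim n z)))
        ((lm n).comp ((fderiv ℝ (massAction G κ) x).comp (pim n))) xb :=
      ((lm n).hasFDerivAt).comp xb h1
    have hcoord : ∀ o : Option (PS n), HasFDerivAt (fun z : Option (PS n) → ℝ => z o)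
        (pj n o) xb := by
      intro o; exact hasFDerivAt_apply o xb
    have hb : HasFDerivAt (betaF n a)
        ((a • (xb (some (PS.S (Fin.last n))) • pj n (some PS.E) +
          xb (some PS.E) • pj n (some (PS.S (Fin.last n))))) -
         (a • (xb none • pj n (some PS.F) +
          xb (some PS.F) • pj n none))) xb := by
      unfold betaF
      exact (((hcoord (some (PS.S (Fin.last n)))).mul (hcoord (some PS.E))).const_mul a).sub
        (((hcoord none).mul (hcoord (some PS.F))).const_mul a)
    have h3 : HasFDerivAt (fun z => betaF n a z • dv n) _ xb := hb.smul_const (dv n)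
    have hD : HasFDerivAt (fun z => lm n (massAction G κ (pim n z)) + betaF n a z • dv n)
        _ xb := h2.add h3
    rw [hfun] at hJ
    rw [hD.fderiv] at hJ
    -- evaluate at none and some s
    have hnone := congrFun hJ none
    have hsome : ∀ s, fderiv ℝ (massAction G κ) x (pim n v) s +
        ((a • (xb (some (PS.S (Fin.last n))) • pj n (some PS.E) +
          xb (some PS.E) • pj n (some (PS.S (Fin.last n))))) -
         (a • (xb none • pj n (some PS.F) +
          xb (some PS.F) • pj n none))) v * dv n (some s) = 0 := by
      intro s
      have := congrFun hJ (some s)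
      simpa [lm_apply_some] using this
    have hBv : ((a • (xb (some (PS.S (Fin.last n))) • pj n (some PS.E) +
          xb (some PS.E) • pj n (some (PS.S (Fin.last n))))) -
         (a • (xb none • pj n (some PS.F) +
          xb (some PS.F) • pj n none))) v = 0 := by
      simpa [lm_apply_none, dv] using hnone
    have hMGv : fderiv ℝ (massAction G κ) x (pim n v) = 0 := by
      funext s
      have hs := hsome s
      rw [hBv] at hs
      simpa using hs
    have hpv : pim n v = 0 := hnd (pim n v) (pim_stoich i hv) hMGv
    have hvs : ∀ t, v (some t) = 0 := fun t => congrFun hpv t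
    have hvnone : v none = 0 := by
      simp [ContinuousLinearMap.sub_apply, ContinuousLinearMap.smul_apply,
        ContinuousLinearMap.add_apply, Pi.smul_apply, smul_eq_mul, hvs,
        ne_of_gt ha, ne_of_gt (hxbpos (some PS.F))] at hBv
      exact hBv
    funext o
    cases o with
    | none => exact hvnone
    | some t => exact hvs t
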